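/- arXiv:2310.16423 — 2 statements merged into one kernel-verified Lean document; each statement's English description precedes it below -/
import Mathlib

section
/- Let G be a finite group, H ≤ G, and ψ a PRIR of G with respect to H. Suppose the transversal {t_1,...,t_s} satisfies h(Σ_k t_k)h^{-1} = Σ_k t_k in the group algebra ℂ[G] for all h ∈ H, and that the restriction of ψ to H is multiplicity-free. Then Σ_{k=1}^{s} ψ(t_k) is block diagonal, equal to ⊕_{α} η_μ(α)·1_{d_α}, i.e. on each irreducible H-block labelled α it acts as a scalar η_μ(α) times the identity. -/
/-! Extending `ψ` to `ℂ[G]` turns the `H`-invariance of `Σ t_k` into the statement that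
`T = Σ ψ(t_k)` commutes with every `ψ(h) = ⊕_α φ^α(h)`. Each block `T_{αβ}` of `T` then
intertwines `φ^α` with `φ^β`, so by Schur's lemma the off-diagonal blocks vanish (the
`φ^α` are pairwise inequivalent) and each diagonal block is a scalar (`φ^α` is
irreducible over `ℂ`). -/

open Matrix

noncomputable section

/-- A matrix representation is irreducible iff it has no nontrivial invariant subspace. -/
def MatIrred {G : Type*} [Group G] {ι : Type*} [Fintype ι] [DecidableEq ι]
    (ρ : G →* Matrix ι ι ℂ) : Prop :=
  ∀ W : Submodule ℂ (ι → ℂ), (∀ g : G, ∀ v ∈ W, (ρ g).mulVec v ∈ W) → W = ⊥ ∨ W = ⊤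

/-- Inequivalence of two matrix representations: every intertwiner vanishes. -/
def MatInequiv {G : Type*} [Group G] {ι κ : Type*} [Fintype ι] [DecidableEq ι]
    [Fintype κ] [DecidableEq κ]
    (ρ : G →* Matrix ι ι ℂ) (π : G →* Matrix κ κ ℂ) : Prop :=
  ∀ S : Matrix ι κ ℂ, (∀ g : G, ρ g * S = S * π g) → S = 0

open Module.End in
theorem MatIrred.exists_eq_smul_one_of_commute {G ι : Type*} [Group G] [Fintype ι]
    [DecidableEq ι] {ρ : G →* Matrix ι ι ℂ} (hρ : MatIrred ρ) {M : Matrix ι ι ℂ}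
    (hM : ∀ g, Commute (ρ g) M) : ∃ c : ℂ, M = c • 1 := by
  rcases isEmpty_or_nonempty ι with hι | hι
  · exact ⟨0, Subsingleton.elim _ _⟩
  obtain ⟨c, hc⟩ := exists_eigenvalue (toLinAlgEquiv' M)
  refine ⟨c, ?_⟩
  have hinv : ∀ g, ∀ v ∈ eigenspace (toLinAlgEquiv' M) c,
      ρ g *ᵥ v ∈ eigenspace (toLinAlgEquiv' M) c :=
    fun g _ hv => mapsTo_genEigenspace_of_comm ((hM g).symm.map toLinAlgEquiv') c 1 hv
  rcases hρ _ hinv with hbot | htop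
  · exact absurd hbot hc
  · refine toLinAlgEquiv'.injective (LinearMap.ext fun v => ?_)
    rw [map_smul, map_one]
    exact mem_eigenspace_iff.mp (htop ▸ Submodule.mem_top : v ∈ eigenspace _ c)

theorem MonoidAlgebra.commute_lift_of_conj_eq {k G A : Type*} [CommSemiring k] [Group G]
    [Semiring A] [Algebra k A] (F : G →* A) {g : G} {x : MonoidAlgebra k G}
    (hx : of k G g * x * of k G g⁻¹ = x) : Commute (F g) (lift k A G F x) := by
  have hFx : F g * lift k A G F x * F g⁻¹ = lift k A G F x := by
    simpa using congrArg (lift k A G F) hx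
  calc F g * lift k A G F x = F g * lift k A G F x * F g⁻¹ * F g := by
        rw [mul_assoc _ (F g⁻¹), ← map_mul, inv_mul_cancel, map_one, mul_one]
    _ = lift k A G F x * F g := by rw [hFx]

namespace Matrix

variable {o α : Type*} {m' : o → Type*} [DecidableEq o]

theorem eq_blockDiagonal'_blockDiag' [Zero α] {T : Matrix (Σ b, m' b) (Σ b, m' b) α}
    (hT : ∀ b b', b ≠ b' → T.submatrix (Sigma.mk b) (Sigma.mk b') = 0) :
    T = blockDiagonal' (blockDiag' T) := by
  ext ⟨b, i⟩ ⟨b', j⟩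
  rcases eq_or_ne b b' with rfl | hne
  · rw [blockDiagonal'_apply_eq, blockDiag'_apply]
  · rw [blockDiagonal'_apply_ne _ _ _ hne]
    exact congrFun (congrFun (hT b b' hne) i) j

variable [Fintype o] [∀ b, Fintype (m' b)] [NonUnitalNonAssocSemiring α]

theorem submatrix_sigmaMk_blockDiagonal'_mul (A : ∀ b, Matrix (m' b) (m' b) α)
    (T : Matrix (Σ b, m' b) (Σ b, m' b) α) (b b' : o) :
    (blockDiagonal' A * T).submatrix (Sigma.mk b) (Sigma.mk b') =
      A b * T.submatrix (Sigma.mk b) (Sigma.mk b') := by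
  ext i j
  simp only [submatrix_apply, mul_apply, ← Finset.univ_sigma_univ, Finset.sum_sigma]
  rw [Fintype.sum_eq_single b fun c hc => by simp [blockDiagonal'_apply_ne _ _ _ (Ne.symm hc)]]
  simp

theorem submatrix_sigmaMk_mul_blockDiagonal' (A : ∀ b, Matrix (m' b) (m' b) α)
    (T : Matrix (Σ b, m' b) (Σ b, m' b) α) (b b' : o) :
    (T * blockDiagonal' A).submatrix (Sigma.mk b) (Sigma.mk b') =
      T.submatrix (Sigma.mk b) (Sigma.mk b') * A b' := by
  ext i j
  simp only [submatrix_apply, mul_apply, ← Finset.univ_sigma_univ, Finset.sum_sigma]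
  rw [Fintype.sum_eq_single b' fun c hc => by simp [blockDiagonal'_apply_ne _ _ _ hc]]
  simp

theorem mul_submatrix_sigmaMk_of_commute_blockDiagonal' {A : ∀ b, Matrix (m' b) (m' b) α}
    {T : Matrix (Σ b, m' b) (Σ b, m' b) α} (hT : Commute (blockDiagonal' A) T) (b b' : o) :
    A b * T.submatrix (Sigma.mk b) (Sigma.mk b') =
      T.submatrix (Sigma.mk b) (Sigma.mk b') * A b' := by
  rw [← submatrix_sigmaMk_blockDiagonal'_mul, hT.eq, submatrix_sigmaMk_mul_blockDiagonal']

end Matrix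

theorem transversal_sum_block_scalar_general {G : Type*} [Group G]
    (H : Subgroup G) {s : ℕ} (t : Fin s → G)
    {B : Type*} [Fintype B] [DecidableEq B] (dB : B → ℕ)
    (φ : ∀ b : B, H →* Matrix (Fin (dB b)) (Fin (dB b)) ℂ)
    (ψ : G →* Matrix ((b : B) × Fin (dB b)) ((b : B) × Fin (dB b)) ℂ)
    (hblock : ∀ h : H, ψ (h : G) = Matrix.blockDiagonal' (fun b => φ b h))
    (hφirr : ∀ b, MatIrred (φ b))
    (hmf : ∀ b b' : B, b ≠ b' → MatInequiv (φ b) (φ b'))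
    (hcomm : ∀ h : H,
      MonoidAlgebra.of ℂ G (h : G) * (∑ k : Fin s, MonoidAlgebra.of ℂ G (t k)) *
          MonoidAlgebra.of ℂ G ((h : G)⁻¹)
        = ∑ k : Fin s, MonoidAlgebra.of ℂ G (t k)) :
    ∃ η : B → ℂ, ∑ k : Fin s, ψ (t k) =
      Matrix.blockDiagonal' (fun b => η b • (1 : Matrix (Fin (dB b)) (Fin (dB b)) ℂ)) := by
  set T := ∑ k : Fin s, ψ (t k)
  have hT : ∀ h : H, Commute (blockDiagonal' fun b => φ b h) T := fun h => by
    simpa [hblock] using MonoidAlgebra.commute_lift_of_conj_eq ψ (hcomm h)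
  have hblocks : ∀ b b' (h : H), φ b h * T.submatrix (Sigma.mk b) (Sigma.mk b') =
      T.submatrix (Sigma.mk b) (Sigma.mk b') * φ b' h := fun b b' h =>
    mul_submatrix_sigmaMk_of_commute_blockDiagonal' (hT h) b b'
  choose η hη using fun b => (hφirr b).exists_eq_smul_one_of_commute (hblocks b b)
  refine ⟨η, ?_⟩
  rw [eq_blockDiagonal'_blockDiag' fun b b' hne => hmf b b' hne _ (hblocks b b')]
  exact congrArg blockDiagonal' (funext hη)

/-- let `ψ` be a PRIR of `G` w.r.t. `H ≤ G` (irreducible unitary, block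
diagonal on `H` with irreducible blocks `φ^α`), whose restriction to `H` is
multiplicity-free, and let `{t_k}` be a transversal whose formal sum `Σ_k t_k ∈ ℂ[G]`
is invariant under conjugation by `H`. Then `Σ_k ψ(t_k)` is block diagonal,
`⊕_α η_μ(α)·1_{d_α}`: on each irreducible `H`-block it is a scalar multiple of the
identity. -/
theorem transversal_sum_block_scalar {G : Type*} [Group G] [Fintype G]
    (H : Subgroup G) {s : ℕ} (t : Fin s → G)
    (htrans : ∀ g : G, ∃! k : Fin s, (t k)⁻¹ * g ∈ H)
    {B : Type*} [Fintype B] [DecidableEq B] (dB : B → ℕ)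
    (φ : ∀ b : B, H →* Matrix (Fin (dB b)) (Fin (dB b)) ℂ)
    (ψ : G →* Matrix ((b : B) × Fin (dB b)) ((b : B) × Fin (dB b)) ℂ)
    (hψu : ∀ g : G, (ψ g)ᴴ * ψ g = 1) (hψirr : MatIrred ψ)
    (hblock : ∀ h : H, ψ (h : G) = Matrix.blockDiagonal' (fun b => φ b h))
    (hφu : ∀ b (h : H), (φ b h)ᴴ * φ b h = 1)
    (hφirr : ∀ b, MatIrred (φ b))
    (hmf : ∀ b b' : B, b ≠ b' → MatInequiv (φ b) (φ b'))
    (hcomm : ∀ h : H,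
      MonoidAlgebra.of ℂ G (h : G) * (∑ k : Fin s, MonoidAlgebra.of ℂ G (t k)) *
          MonoidAlgebra.of ℂ G ((h : G)⁻¹)
        = ∑ k : Fin s, MonoidAlgebra.of ℂ G (t k)) :
    ∃ η : B → ℂ, ∑ k : Fin s, ψ (t k) =
      Matrix.blockDiagonal' (fun b => η b • (1 : Matrix (Fin (dB b)) (Fin (dB b)) ℂ)) :=
  transversal_sum_block_scalar_general H t dB φ ψ hblock hφirr hmf hcomm
end
end

section
/- Let ψ^μ be a PRIR of S(m) with respect to the subgroup S(m-1). Then the Jucys-Murphy element J_m = Σ_{a=1}^{m-1} (a m) is represented by the block-diagonal matrix ψ^μ(J_m) = ⊕_{α} γ_μ(α)·1_{d_α}, where the eigenvalue on the H-irrep block α is γ_μ(α) = C(m,2)·χ^μ((12))/d_μ − C(m-1,2)·χ^α((12))/d_α, with multiplicity d_α. -/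
open Matrix

noncomputable section

/-!
Write `T_n` for the sum of the transpositions of `S(n)`, so that `J_m = T_m - T_{m-1}`. As a
class sum, `T_n` commutes with `S(n)`, so by Schur's lemma `ψ^μ(T_m)` is the scalar
`tr ψ^μ(T_m) / d_μ = C(m,2) χ^μ((12)) / d_μ`; since `ψ^μ` restricts to `⊕_α φ^α` on `S(m-1)`,
`T_{m-1}` acts on the block `α` as `C(m-1,2) χ^α((12)) / d_α`. Transpositions are summed over
ordered pairs of distinct points, so each is counted twice, and `S(m-1)` is realised as
`Perm {y // y ≠ x}`.
-/

namespace MatIrred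

variable {G ι : Type*} [Group G] [Fintype ι] [DecidableEq ι] {ρ : G →* Matrix ι ι ℂ}

theorem eq_smul_one_of_commute (hρ : MatIrred ρ) {T : Matrix ι ι ℂ}
    (hT : ∀ g, ρ g * T = T * ρ g) : T = (trace T / Fintype.card ι) • 1 := by
  cases isEmpty_or_nonempty ι
  · exact Subsingleton.elim _ _
  obtain ⟨c, hc⟩ := Module.End.exists_eigenvalue T.mulVecLin
  have hinv : ∀ g, ∀ v ∈ Module.End.eigenspace T.mulVecLin c,
      ρ g *ᵥ v ∈ Module.End.eigenspace T.mulVecLin c := by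
    intro g v hv
    rw [Module.End.mem_eigenspace_iff, mulVecLin_apply] at hv ⊢
    rw [mulVec_mulVec, ← hT g, ← mulVec_mulVec, hv, mulVec_smul]
  have htop : Module.End.eigenspace T.mulVecLin c = ⊤ := (hρ _ hinv).resolve_left hc
  have hTc : T = c • 1 := by
    refine ext_iff_mulVec.mpr fun v => ?_
    have hv : v ∈ Module.End.eigenspace T.mulVecLin c := htop ▸ Submodule.mem_top
    rw [Module.End.mem_eigenspace_iff, mulVecLin_apply] at hv
    rw [hv, smul_mulVec, one_mulVec]
  have hcard : (Fintype.card ι : ℂ) ≠ 0 := Nat.cast_ne_zero.mpr Fintype.card_ne_zero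
  rw [hTc, trace_smul, trace_one, smul_eq_mul, mul_div_cancel_right₀ _ hcard]

theorem comp_of_surjective {H : Type*} [Group H] (hρ : MatIrred ρ) {f : H →* G}
    (hf : Function.Surjective f) : MatIrred (ρ.comp f) := fun W hW =>
  hρ W fun g => by
    obtain ⟨h, rfl⟩ := hf g
    exact hW h

end MatIrred

theorem IsConj.trace_map_eq {G ι : Type*} [Group G] [Fintype ι] [DecidableEq ι]
    (ρ : G →* Matrix ι ι ℂ) {a b : G} (h : IsConj a b) : trace (ρ a) = trace (ρ b) := by
  obtain ⟨c, rfl⟩ := isConj_iff.mp h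
  rw [map_mul, map_mul, trace_mul_cycle, ← map_mul, inv_mul_cancel, map_one, one_mul]

section Transpositions

open Equiv Finset

variable {β : Type*} [Fintype β]

theorem Finset.sum_offDiag_univ [DecidableEq β] {M : Type*} [AddCommMonoid M]
    (F : β → β → M) :
    ∑ p ∈ (univ : Finset β).offDiag, F p.1 p.2 = ∑ i, ∑ j, if i = j then 0 else F i j := by
  rw [← Fintype.sum_prod_type', sum_ite, sum_const_zero, zero_add]
  exact sum_congr (by ext; simp) fun _ _ => rfl

theorem Finset.sum_offDiag_univ_eq_subtype_ne_add [DecidableEq β] {M : Type*} [AddCommMonoid M]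
    (F : β → β → M) (x : β) :
    ∑ p ∈ (univ : Finset β).offDiag, F p.1 p.2 =
      ∑ q ∈ (univ : Finset {y // y ≠ x}).offDiag, F q.1 q.2 +
        ∑ a ∈ univ.filter (· ≠ x), (F a x + F x a) := by
  have hne : ∀ a : {y // y ≠ x}, (a = x ↔ False) ∧ (x = a ↔ False) := fun a =>
    ⟨iff_false_intro a.2, iff_false_intro (Ne.symm a.2)⟩
  rw [sum_offDiag_univ, sum_offDiag_univ fun i j : {y // y ≠ x} => F i j,
    sum_subtype (univ.filter (· ≠ x)) (p := (· ≠ x)) (by simp)]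
  simp_rw [Fintype.sum_eq_add_sum_subtype_ne _ x]
  simp only [Subtype.ext_iff, sum_add_distrib, if_true, hne, if_false, zero_add]
  abel

theorem Finset.sum_offDiag_swap_conj [DecidableEq β] {M : Type*} [AddCommMonoid M]
    (F : Perm β → M) (g : Perm β) :
    ∑ p ∈ (univ : Finset β).offDiag, F (g * swap p.1 p.2 * g⁻¹) =
      ∑ p ∈ (univ : Finset β).offDiag, F (swap p.1 p.2) := by
  simp_rw [← swap_apply_apply]
  exact sum_nbij' (fun p => (g p.1, g p.2)) (fun p => (g⁻¹ p.1, g⁻¹ p.2))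
    (by simp) (by simp) (by simp) (by simp) (by simp)

theorem Finset.card_offDiag_univ :
    #(univ : Finset β).offDiag = 2 * (Fintype.card β).choose 2 := by
  rw [offDiag_card, card_univ, ← Nat.mul_sub_one, Nat.choose_two_right,
    Nat.two_mul_div_two_of_even (Nat.even_mul_pred_self _)]

theorem MatIrred.sum_offDiag_swap [DecidableEq β] {ι : Type*} [Fintype ι] [DecidableEq ι]
    {ρ : Perm β →* Matrix ι ι ℂ} (hρ : MatIrred ρ) {a b : β} (hab : a ≠ b) :
    ∑ p ∈ (univ : Finset β).offDiag, ρ (swap p.1 p.2) =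
      (2 * (Fintype.card β).choose 2 * trace (ρ (swap a b)) / Fintype.card ι : ℂ) • 1 := by
  have hcomm : ∀ g, ρ g * ∑ p ∈ (univ : Finset β).offDiag, ρ (swap p.1 p.2) =
      (∑ p ∈ (univ : Finset β).offDiag, ρ (swap p.1 p.2)) * ρ g := fun g => by
    rw [mul_sum, sum_mul, ← sum_offDiag_swap_conj (fun σ => ρ σ * ρ g) g]
    refine sum_congr rfl fun p _ => ?_
    rw [← map_mul, ← map_mul, inv_mul_cancel_right]
  have htrace : ∀ p ∈ (univ : Finset β).offDiag,
      trace (ρ (swap p.1 p.2)) = trace (ρ (swap a b)) := fun p hp =>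
    ((Perm.isConj_swap hab (mem_offDiag.mp hp).2.2).trace_map_eq ρ).symm
  rw [hρ.eq_smul_one_of_commute hcomm, trace_sum, sum_congr rfl htrace, sum_const,
    nsmul_eq_mul, card_offDiag_univ, Nat.cast_mul, Nat.cast_ofNat]

end Transpositions

namespace Equiv.Perm

variable {α : Type*} [DecidableEq α]

theorem ofSubtype_mem_stabilizer_of_ne (x : α) (τ : Perm {y // y ≠ x}) :
    ofSubtype τ ∈ MulAction.stabilizer (Perm α) x :=
  ofSubtype_apply_of_not_mem τ (not_not.mpr rfl)

def subtypeNeMulEquivStabilizer (x : α) :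
    Perm {y // y ≠ x} ≃* MulAction.stabilizer (Perm α) x :=
  MulEquiv.ofBijective (ofSubtype.codRestrict _ (ofSubtype_mem_stabilizer_of_ne x))
    ⟨fun _ _ h => ofSubtype_injective (congrArg Subtype.val h), fun h => by
      have hx : (h : Perm α) x = x := h.2
      refine ⟨(h : Perm α).subtypePerm fun y => (h : Perm α).injective.ne_iff' hx, ?_⟩
      exact Subtype.ext (ofSubtype_subtypePerm _ fun y hy hyx => hy (hyx ▸ hx))⟩

theorem coe_subtypeNeMulEquivStabilizer_swap (x : α) (a b : {y // y ≠ x}) :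
    (subtypeNeMulEquivStabilizer x (swap a b) : Perm α) = swap (a : α) b :=
  ofSubtype_swap_eq a b

theorem ne_of_swap_mem_stabilizer {x a b : α} (hab : a ≠ b)
    (hmem : swap a b ∈ MulAction.stabilizer (Perm α) x) : a ≠ x ∧ b ≠ x := by
  have hx : ¬(x = a ∨ x = b) := fun h => swap_apply_ne_self_iff.mpr ⟨hab, h⟩ hmem
  exact ⟨fun h => hx (.inl h.symm), fun h => hx (.inr h.symm)⟩

end Equiv.Perm

open Equiv Equiv.Perm Finset in
theorem MatIrred.sum_offDiag_swap_stabilizer {α ι : Type*} [Fintype α] [DecidableEq α]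
    [Fintype ι] [DecidableEq ι] {x : α}
    {ρ : MulAction.stabilizer (Perm α) x →* Matrix ι ι ℂ} (hρ : MatIrred ρ) {a b : α}
    (hab : a ≠ b) (hmem : swap a b ∈ MulAction.stabilizer (Perm α) x) :
    ∑ q ∈ (univ : Finset {y // y ≠ x}).offDiag,
        ρ (subtypeNeMulEquivStabilizer x (swap q.1 q.2)) =
      (2 * (Fintype.card α - 1).choose 2 * trace (ρ ⟨swap a b, hmem⟩) /
        Fintype.card ι : ℂ) • 1 := by
  obtain ⟨hax, hbx⟩ := ne_of_swap_mem_stabilizer hab hmem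
  have he : subtypeNeMulEquivStabilizer x (swap ⟨a, hax⟩ ⟨b, hbx⟩) = ⟨swap a b, hmem⟩ :=
    Subtype.ext (coe_subtypeNeMulEquivStabilizer_swap x _ _)
  refine ((hρ.comp_of_surjective (f := (subtypeNeMulEquivStabilizer x).toMonoidHom)
    (MulEquiv.surjective _)).sum_offDiag_swap (a := ⟨a, hax⟩) (b := ⟨b, hbx⟩)
    (by simpa using hab)).trans ?_
  rw [MonoidHom.comp_apply, MulEquiv.coe_toMonoidHom, he, Fintype.card_subtype_compl,
    Fintype.card_subtype_eq]

theorem Matrix.smul_one_sub_blockDiagonal'_smul_one {o R : Type*} {m' : o → Type*}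
    [DecidableEq o] [∀ i, DecidableEq (m' i)] [CommRing R] (c : R) (d : o → R) :
    c • (1 : Matrix (Σ i, m' i) (Σ i, m' i) R) -
        blockDiagonal' (fun i => d i • (1 : Matrix (m' i) (m' i) R)) =
      blockDiagonal' fun i => (c - d i) • 1 := by
  rw [← blockDiagonal'_one, ← blockDiagonal'_smul, ← blockDiagonal'_sub]
  congr 1
  funext i
  simp [sub_smul]

open Equiv Equiv.Perm Finset in
theorem jucys_murphy_block_diagonal_general {m : ℕ}
    (x a0 a1 : Fin m) (ha0 : (a0 : ℕ) = 0) (ha1 : (a1 : ℕ) = 1)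
    (hmem : Equiv.swap a0 a1 ∈ MulAction.stabilizer (Equiv.Perm (Fin m)) x)
    {B : Type*} [Fintype B] [DecidableEq B] (dB : B → ℕ)
    (φ : ∀ b : B, (MulAction.stabilizer (Equiv.Perm (Fin m)) x) →*
        Matrix (Fin (dB b)) (Fin (dB b)) ℂ)
    (ψ : Equiv.Perm (Fin m) →*
        Matrix ((b : B) × Fin (dB b)) ((b : B) × Fin (dB b)) ℂ)
    (hψirr : MatIrred ψ)
    (hblock : ∀ h : MulAction.stabilizer (Equiv.Perm (Fin m)) x,
        ψ (h : Equiv.Perm (Fin m)) = Matrix.blockDiagonal' (fun b => φ b h))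
    (hφirr : ∀ b, MatIrred (φ b)) :
    ∑ a ∈ Finset.univ.filter (fun a : Fin m => a ≠ x), ψ (Equiv.swap a x)
      = Matrix.blockDiagonal' (fun b =>
          ((m.choose 2 : ℂ) * Matrix.trace (ψ (Equiv.swap a0 a1)) /
              (Fintype.card ((b : B) × Fin (dB b)) : ℂ) -
            ((m - 1).choose 2 : ℂ) * Matrix.trace (φ b ⟨Equiv.swap a0 a1, hmem⟩) /
              (dB b : ℂ)) • (1 : Matrix (Fin (dB b)) (Fin (dB b)) ℂ)) := by
  have h01 : a0 ≠ a1 := Fin.ne_of_val_ne (by omega)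
  have hsub : ∑ q ∈ (univ : Finset {y // y ≠ x}).offDiag, ψ (swap (q.1 : Fin m) q.2) =
      blockDiagonal' fun b => ∑ q ∈ (univ : Finset {y // y ≠ x}).offDiag,
        φ b (subtypeNeMulEquivStabilizer x (swap q.1 q.2)) := by
    simp_rw [← coe_subtypeNeMulEquivStabilizer_swap, hblock,
      ← blockDiagonal'AddMonoidHom_apply, ← map_sum, Finset.sum_fn]
  have hpair : ∑ a ∈ univ.filter (· ≠ x), (ψ (swap a x) + ψ (swap x a)) =
      (2 : ℂ) • ∑ a ∈ univ.filter (· ≠ x), ψ (swap a x) := by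
    rw [smul_sum]
    exact sum_congr rfl fun a _ => by rw [Equiv.swap_comm x a, two_smul]
  have hsplit := sum_offDiag_univ_eq_subtype_ne_add (fun i j => ψ (swap i j)) x
  refine smul_right_injective _ (two_ne_zero : (2 : ℂ) ≠ 0) ?_
  simp only [← hpair, eq_sub_of_add_eq' hsplit.symm, hψirr.sum_offDiag_swap h01, hsub,
    (hφirr _).sum_offDiag_swap_stabilizer h01 hmem, smul_one_sub_blockDiagonal'_smul_one,
    Fintype.card_fin, ← blockDiagonal'_smul]
  congr 1
  funext b
  rw [Pi.smul_apply, smul_smul]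
  ring_nf

/-- for a PRIR `ψ^μ` of `S(m)` w.r.t. the subgroup `S(m-1)` fixing the point
`x = m-1`, the Jucys–Murphy element `J_m = Σ_a (a m)` is represented by the block
diagonal matrix `⊕_α γ_μ(α)·1_{d_α}` with
`γ_μ(α) = C(m,2)·χ^μ((12))/d_μ − C(m-1,2)·χ^α((12))/d_α`
(each eigenvalue `γ_μ(α)` occurring with multiplicity `d_α`). -/
theorem jucys_murphy_block_diagonal {m : ℕ} (hm : 3 ≤ m)
    (x a0 a1 : Fin m) (hx : (x : ℕ) = m - 1) (ha0 : (a0 : ℕ) = 0) (ha1 : (a1 : ℕ) = 1)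
    (hmem : Equiv.swap a0 a1 ∈ MulAction.stabilizer (Equiv.Perm (Fin m)) x)
    {B : Type*} [Fintype B] [DecidableEq B] (dB : B → ℕ)
    (φ : ∀ b : B, (MulAction.stabilizer (Equiv.Perm (Fin m)) x) →*
        Matrix (Fin (dB b)) (Fin (dB b)) ℂ)
    (ψ : Equiv.Perm (Fin m) →*
        Matrix ((b : B) × Fin (dB b)) ((b : B) × Fin (dB b)) ℂ)
    (hψu : ∀ g, (ψ g)ᴴ * ψ g = 1) (hψirr : MatIrred ψ)
    (hblock : ∀ h : MulAction.stabilizer (Equiv.Perm (Fin m)) x,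
        ψ (h : Equiv.Perm (Fin m)) = Matrix.blockDiagonal' (fun b => φ b h))
    (hφirr : ∀ b, MatIrred (φ b))
    (hmf : ∀ b b' : B, b ≠ b' → MatInequiv (φ b) (φ b')) :
    ∑ a ∈ Finset.univ.filter (fun a : Fin m => a ≠ x), ψ (Equiv.swap a x)
      = Matrix.blockDiagonal' (fun b =>
          ((m.choose 2 : ℂ) * Matrix.trace (ψ (Equiv.swap a0 a1)) /
              (Fintype.card ((b : B) × Fin (dB b)) : ℂ) -
            ((m - 1).choose 2 : ℂ) * Matrix.trace (φ b ⟨Equiv.swap a0 a1, hmem⟩) /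
              (dB b : ℂ)) • (1 : Matrix (Fin (dB b)) (Fin (dB b)) ℂ)) :=
  jucys_murphy_block_diagonal_general x a0 a1 ha0 ha1 hmem dB φ ψ hψirr hblock hφirr
end
end
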